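/- arXiv:2506.05619 — 2 statements merged into one kernel-verified Lean document; each statement's English description precedes it below -/
import Mathlib

section
/- Let M = 3 and let σ be the profile placing mass 0.3 on (y_1 ≻ y_2 ≻ y_3), 0.1 on (y_2 ≻ y_3 ≻ y_1), 0.3 on (y_3 ≻ y_1 ≻ y_2), and 0.3 on (y_3 ≻ y_2 ≻ y_1). Then σ admits a PMC ranking r^σ with r^σ(y_3) < r^σ(y_1) < r^σ(y_2) (indeed P^σ(y_3 ≻ y_1) = 0.7, P^σ(y_3 ≻ y_2) = 0.6, P^σ(y_1 ≻ y_2) = 0.6 are all greater than 1/2), yet u_1 = 0.3 < 0.4 = u_2. Consequently, for every β ≥ 0 the softmax policy Φ^β(σ), with Φ^β(σ)(y_j) ∝ u_j·exp(β·u_j), satisfies Φ^β(σ)(y_1) < Φ^β(σ)(y_2), so Φ^β violates pairwise majority consistency for every finite β ≥ 0. -/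
/-!
The majority relation of the profile is the transitive order `y₃ ≻ y₁ ≻ y₂`, but the worst
pairwise score of `y₁` (`0.3`, against `y₃`) is below that of `y₂` (`0.4`, against both others).
For `β ≥ 0` the map `x ↦ x e^{βx}` is strictly increasing on `[0, ∞)`, so the softmax policy
orders the alternatives as their scores `u_i`, and puts more mass on `y₂` than on `y₁`.
-/

open Finset

noncomputable section

/-- A profile: a probability distribution over rankings (permutations of `Fin M`,
where `r i` is the 0-indexed position of alternative `i`, smaller is better). -/
def IsProfile (M : ℕ) (σ : Equiv.Perm (Fin M) → ℝ) : Prop :=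
  (∀ r, 0 ≤ σ r) ∧ ∑ r : Equiv.Perm (Fin M), σ r = 1

/-- Induced preference function `P^σ(y_i ≻ y_j)`. -/
def Pref (M : ℕ) (σ : Equiv.Perm (Fin M) → ℝ) (i j : Fin M) : ℝ :=
  ∑ r : Equiv.Perm (Fin M), σ r * (if r i < r j then (1 : ℝ) else 0)

/-- Top-choice share `w^σ_i`. -/
def topShare (M : ℕ) (σ : Equiv.Perm (Fin M) → ℝ) (i : Fin M) : ℝ :=
  ∑ r : Equiv.Perm (Fin M), (if (r i : ℕ) = 0 then σ r else 0)

/-- Borda score `B(y_i) = Σ_r σ_r (M − r(y_i))` (with 1-indexed ranks; here ranks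
are 0-indexed, so the weight is `M − 1 − r i`). -/
def Borda (M : ℕ) (σ : Equiv.Perm (Fin M) → ℝ) (i : Fin M) : ℝ :=
  ∑ r : Equiv.Perm (Fin M), σ r * ((M : ℝ) - 1 - ((r i : ℕ) : ℝ))

/-- `u_i := min_{j ≠ i} P^σ(y_i ≻ y_j)`. -/
def minPref (M : ℕ) (σ : Equiv.Perm (Fin M) → ℝ) (i : Fin M) : ℝ :=
  sInf {x : ℝ | ∃ j, j ≠ i ∧ x = Pref M σ i j}

/-- The policy `Φ*(σ)(y_i) := u_i / Σ_j u_j`. -/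
def PhiStar (M : ℕ) (σ : Equiv.Perm (Fin M) → ℝ) (i : Fin M) : ℝ :=
  minPref M σ i / ∑ j : Fin M, minPref M σ j

open Equiv

theorem pref_add_pref_swap {M : ℕ} {σ : Perm (Fin M) → ℝ} (hσ : ∑ r, σ r = 1) {i j : Fin M}
    (hij : i ≠ j) : Pref M σ i j + Pref M σ j i = 1 := by
  rw [Pref, Pref, ← sum_add_distrib]
  refine (sum_congr rfl fun r _ => ?_).trans hσ
  rcases lt_or_gt_of_ne (r.injective.ne hij) with h | h <;> simp [h, h.not_gt]

def IsPMCRanking (M : ℕ) (σ : Perm (Fin M) → ℝ) (r : Perm (Fin M)) : Prop :=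
  ∀ i j, i ≠ j → (1 / 2 < Pref M σ i j ↔ r i < r j)

theorem isPMCRanking_of_majority {M : ℕ} {σ : Perm (Fin M) → ℝ} (hσ : ∑ r, σ r = 1)
    {r : Perm (Fin M)} (hr : ∀ i j, r i < r j → 1 / 2 < Pref M σ i j) :
    IsPMCRanking M σ r := by
  refine fun i j hij => ⟨fun hp => ?_, hr i j⟩
  by_contra hlt
  have hji := hr j i (lt_of_le_of_ne (not_lt.mp hlt) (r.injective.ne hij.symm))
  linarith [pref_add_pref_swap hσ hij]

theorem minPref_nonneg {M : ℕ} {σ : Perm (Fin M) → ℝ} (hσ : ∀ r, 0 ≤ σ r) (i : Fin M) :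
    0 ≤ minPref M σ i := by
  refine Real.sInf_nonneg ?_
  rintro _ ⟨j, -, rfl⟩
  exact sum_nonneg fun r _ => mul_nonneg (hσ r) (by split_ifs <;> norm_num)

theorem minPref_fin_three (σ : Perm (Fin 3) → ℝ) {i j k : Fin 3} (hij : i ≠ j) (hik : i ≠ k)
    (hjk : j ≠ k) : minPref 3 σ i = min (Pref 3 σ i j) (Pref 3 σ i k) := by
  have hset : {x : ℝ | ∃ l, l ≠ i ∧ x = Pref 3 σ i l} = {Pref 3 σ i j, Pref 3 σ i k} := by
    ext x
    constructor
    · rintro ⟨l, hli, rfl⟩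
      obtain rfl | rfl : l = j ∨ l = k := by omega
      all_goals simp
    · rintro (rfl | rfl)
      exacts [⟨j, hij.symm, rfl⟩, ⟨k, hik.symm, rfl⟩]
  rw [minPref, hset, csInf_pair]

theorem strictMonoOn_mul_exp_mul {β : ℝ} (hβ : 0 ≤ β) :
    StrictMonoOn (fun x => x * Real.exp (β * x)) (Set.Ici 0) := by
  intro x hx y _ hxy
  calc x * Real.exp (β * x) ≤ x * Real.exp (β * y) := by gcongr
    _ < y * Real.exp (β * y) := by gcongr

def softmaxPolicy {ι : Type*} [Fintype ι] (β : ℝ) (u : ι → ℝ) (i : ι) : ℝ :=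
  u i * Real.exp (β * u i) / ∑ m, u m * Real.exp (β * u m)

theorem softmaxPolicy_lt_of_lt {ι : Type*} [Fintype ι] {β : ℝ} (hβ : 0 ≤ β) {u : ι → ℝ}
    (hu : ∀ m, 0 ≤ u m) {i j : ι} (hij : u i < u j) :
    softmaxPolicy β u i < softmaxPolicy β u j := by
  have hlt := strictMonoOn_mul_exp_mul hβ (hu i) (hu j) hij
  have hpos : 0 < ∑ m, u m * Real.exp (β * u m) :=
    calc 0 ≤ u i * Real.exp (β * u i) := by have := hu i; positivity
      _ < u j * Real.exp (β * u j) := hlt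
      _ ≤ ∑ m, u m * Real.exp (β * u m) :=
        single_le_sum (f := fun m => u m * Real.exp (β * u m))
          (fun m _ => by have := hu m; positivity) (mem_univ j)
  exact div_lt_div_of_pos_right hlt hpos

theorem sum_perm_fin_three {M : Type*} [AddCommMonoid M] (f : Perm (Fin 3) → M) :
    ∑ r, f r = f 1 + f (finRotate 3) + f (finRotate 3)⁻¹ + f (swap 0 1) + f (swap 0 2)
      + f (swap 1 2) := by
  rw [show (univ : Finset (Perm (Fin 3))) =
    {1, finRotate 3, (finRotate 3)⁻¹, swap 0 1, swap 0 2, swap 1 2} by decide]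
  rw [sum_insert (by decide), sum_insert (by decide), sum_insert (by decide),
    sum_insert (by decide), sum_insert (by decide), sum_singleton]
  abel

def counterexampleProfile : Perm (Fin 3) → ℝ := fun r =>
  if r = 1 then 0.3
  else if r = (finRotate 3)⁻¹ then 0.1
  else if r = finRotate 3 then 0.3
  else if r = swap 0 2 then 0.3 else 0

local notation "σ₀" => counterexampleProfile

theorem isProfile_counterexampleProfile : IsProfile 3 σ₀ := by
  refine ⟨fun r => ?_, ?_⟩
  · unfold counterexampleProfile
    split_ifs <;> norm_num
  · simp +decide only [counterexampleProfile, sum_perm_fin_three]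
    norm_num

theorem pref_counterexampleProfile :
    Pref 3 σ₀ 2 0 = 0.7 ∧ Pref 3 σ₀ 2 1 = 0.6 ∧ Pref 3 σ₀ 0 1 = 0.6 := by
  simp +decide only [Pref, counterexampleProfile, sum_perm_fin_three]
  norm_num

theorem minPref_counterexampleProfile : minPref 3 σ₀ 0 = 0.3 ∧ minPref 3 σ₀ 1 = 0.4 := by
  obtain ⟨h20, h21, h01⟩ := pref_counterexampleProfile
  have swapped {i j : Fin 3} (hij : i ≠ j) : Pref 3 σ₀ i j = 1 - Pref 3 σ₀ j i := by
    linarith [pref_add_pref_swap isProfile_counterexampleProfile.2 hij]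
  rw [minPref_fin_three σ₀ (j := 1) (k := 2) (by decide) (by decide) (by decide),
    minPref_fin_three σ₀ (j := 0) (k := 2) (by decide) (by decide) (by decide),
    swapped (i := 0) (j := 2) (by decide), swapped (i := 1) (j := 0) (by decide),
    swapped (i := 1) (j := 2) (by decide), h20, h21, h01]
  norm_num

-- `finRotate 3` sends `0 ↦ 1, 1 ↦ 2, 2 ↦ 0`: it ranks `y₃` first, `y₁` second, `y₂` last.
theorem isPMCRanking_finRotate : IsPMCRanking 3 σ₀ (finRotate 3) := by
  obtain ⟨h20, h21, h01⟩ := pref_counterexampleProfile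
  refine isPMCRanking_of_majority isProfile_counterexampleProfile.2 fun i j hr => ?_
  fin_cases i <;> fin_cases j <;> simp only [Fin.reduceFinMk] at hr ⊢ <;>
    first | exact absurd hr (by decide) | norm_num [h20, h21, h01]

/-- the explicit `M = 3` profile admits a PMC ranking with
`y_3 ≻ y_1 ≻ y_2`, yet `u_1 = 0.3 < 0.4 = u_2`, so for every `β ≥ 0` the
softmax policy `Φ^β` puts less mass on `y_1` than on `y_2`: `Φ^β` violates
pairwise majority consistency for every finite `β`. -/
theorem softmax_violates_PMC :
    let σ : Equiv.Perm (Fin 3) → ℝ := fun r =>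
      if r = (1 : Equiv.Perm (Fin 3)) then 0.3
      else if r = (finRotate 3)⁻¹ then 0.1
      else if r = finRotate 3 then 0.3
      else if r = Equiv.swap 0 2 then 0.3 else 0
    (Pref 3 σ 2 0 = 0.7 ∧ Pref 3 σ 2 1 = 0.6 ∧ Pref 3 σ 0 1 = 0.6) ∧
    (∃ rσ : Equiv.Perm (Fin 3),
      (∀ i j : Fin 3, i ≠ j → (1 / 2 < Pref 3 σ i j ↔ rσ i < rσ j)) ∧
      rσ 2 < rσ 0 ∧ rσ 0 < rσ 1) ∧
    (minPref 3 σ 0 = 0.3 ∧ minPref 3 σ 1 = 0.4) ∧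
    ∀ β : ℝ, 0 ≤ β →
      minPref 3 σ 0 * Real.exp (β * minPref 3 σ 0)
          / (∑ m, minPref 3 σ m * Real.exp (β * minPref 3 σ m))
        < minPref 3 σ 1 * Real.exp (β * minPref 3 σ 1)
          / (∑ m, minPref 3 σ m * Real.exp (β * minPref 3 σ m)) := by
  obtain ⟨u0, u1⟩ := minPref_counterexampleProfile
  refine ⟨pref_counterexampleProfile,
    ⟨finRotate 3, isPMCRanking_finRotate, by decide, by decide⟩, ⟨u0, u1⟩, fun β hβ => ?_⟩
  exact softmaxPolicy_lt_of_lt hβ (minPref_nonneg isProfile_counterexampleProfile.1)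
    (by norm_num [u0, u1])
end
end

section
/- Let σ be a profile over rankings of M alternatives that admits a PMC ranking r^σ, and let y* be the top alternative of r^σ (i.e., r^σ(y*) = 1). Then y* is a Condorcet winner (P^σ(y* ≻ y) > 1/2 for all y ≠ y*), y* is the unique maximizer of u, and the deterministic policy π with π(y*) = 1 and π(y) = 0 for y ≠ y* satisfies π(y_i) ≥ π(y_j) whenever r^σ(y_i) < r^σ(y_j); that is, the limiting policy Φ^∞ satisfies pairwise majority consistency. -/
/-!
For `i ≠ j` exactly one of `i, j` is ahead in each ranking, so `P(i ≻ j) + P(j ≻ i) = 1`.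
The top `y*` of a PMC ranking beats every other alternative with probability above `1/2`, hence
`u(y*) ≥ 1/2`, while every `j ≠ y*` loses to `y*`, so `u(j) ≤ P(j ≻ y*) < 1/2`.
-/

open Finset

noncomputable section

section

variable {M : ℕ} {σ : Equiv.Perm (Fin M) → ℝ}

theorem Pref_add_Pref_swap {i j : Fin M} (hij : i ≠ j) :
    Pref M σ i j + Pref M σ j i = ∑ r, σ r := by
  rw [Pref, Pref, ← sum_add_distrib]
  refine sum_congr rfl fun r _ => ?_
  rcases lt_or_gt_of_ne (r.injective.ne hij) with h | h
  · simp [h, h.not_gt]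
  · simp [h, h.not_gt]

theorem Pref_swap_lt_half (hσ : ∑ r, σ r = 1) {i j : Fin M} (hij : i ≠ j)
    (h : 1 / 2 < Pref M σ i j) : Pref M σ j i < 1 / 2 := by
  linarith [Pref_add_Pref_swap (σ := σ) hij]

theorem minPref_le_Pref {i j : Fin M} (hj : j ≠ i) : minPref M σ i ≤ Pref M σ i j := by
  refine csInf_le ?_ ⟨j, hj, rfl⟩
  refine ((Set.finite_range (Pref M σ i)).subset ?_).bddBelow
  rintro _ ⟨k, -, rfl⟩
  exact ⟨k, rfl⟩

theorem le_minPref {i : Fin M} {c : ℝ} (hne : ∃ j, j ≠ i)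
    (h : ∀ j, j ≠ i → c ≤ Pref M σ i j) : c ≤ minPref M σ i := by
  obtain ⟨j, hj⟩ := hne
  refine le_csInf ⟨_, j, hj, rfl⟩ ?_
  rintro _ ⟨k, hk, rfl⟩
  exact h k hk

def IsCondorcetWinner (M : ℕ) (σ : Equiv.Perm (Fin M) → ℝ) (y : Fin M) : Prop :=
  ∀ z, z ≠ y → 1 / 2 < Pref M σ y z

theorem isCondorcetWinner_of_rank_eq_zero {r : Equiv.Perm (Fin M)}
    (hpmc : ∀ i j, i ≠ j → r i < r j → 1 / 2 < Pref M σ i j)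
    {y : Fin M} (hy : (r y : ℕ) = 0) : IsCondorcetWinner M σ y := by
  intro z hz
  refine hpmc y z hz.symm ?_
  have : r z ≠ r y := r.injective.ne hz
  rw [Fin.lt_def]
  omega

theorem IsCondorcetWinner.minPref_lt (hσ : ∑ r, σ r = 1) {y : Fin M}
    (hy : IsCondorcetWinner M σ y) {j : Fin M} (hj : j ≠ y) :
    minPref M σ j < minPref M σ y :=
  calc minPref M σ j ≤ Pref M σ j y := minPref_le_Pref hj.symm
    _ < 1 / 2 := Pref_swap_lt_half hσ hj.symm (hy j hj)
    _ ≤ minPref M σ y := le_minPref ⟨j, hj⟩ fun z hz => (hy z hz).le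

end

theorem phiInfty_satisfies_PMC_general
    (M : ℕ) (σ : Equiv.Perm (Fin M) → ℝ) (hσ : IsProfile M σ)
    (rσ : Equiv.Perm (Fin M))
    (hpmc : ∀ i j : Fin M, i ≠ j → (1 / 2 < Pref M σ i j ↔ rσ i < rσ j))
    (ystar : Fin M) (hy : (rσ ystar : ℕ) = 0) :
    (∀ y, y ≠ ystar → 1 / 2 < Pref M σ ystar y) ∧
    (∀ j, j ≠ ystar → minPref M σ j < minPref M σ ystar) ∧
    (∀ i j : Fin M, rσ i < rσ j →
      (if j = ystar then (1 : ℝ) else 0) ≤ (if i = ystar then (1 : ℝ) else 0)) := by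
  have hcond : IsCondorcetWinner M σ ystar :=
    isCondorcetWinner_of_rank_eq_zero (fun i j hij => (hpmc i j hij).mpr) hy
  refine ⟨hcond, fun j hj => hcond.minPref_lt hσ.2 hj, fun i j hij => ?_⟩
  have hj : j ≠ ystar := by
    rintro rfl
    rw [Fin.lt_def] at hij
    omega
  rw [if_neg hj]
  split_ifs <;> norm_num

/-- if `σ` admits a PMC ranking `r^σ` with top alternative `y*`,
then `y*` is a Condorcet winner and the unique maximizer of `u`, and the
deterministic policy on `y*` is ordered consistently with `r^σ`: the limiting
policy `Φ^∞` satisfies pairwise majority consistency. -/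
theorem phiInfty_satisfies_PMC
    (M : ℕ) (hM : 2 ≤ M) (σ : Equiv.Perm (Fin M) → ℝ) (hσ : IsProfile M σ)
    (rσ : Equiv.Perm (Fin M))
    (hpmc : ∀ i j : Fin M, i ≠ j → (1 / 2 < Pref M σ i j ↔ rσ i < rσ j))
    (ystar : Fin M) (hy : (rσ ystar : ℕ) = 0) :
    (∀ y, y ≠ ystar → 1 / 2 < Pref M σ ystar y) ∧
    (∀ j, j ≠ ystar → minPref M σ j < minPref M σ ystar) ∧
    (∀ i j : Fin M, rσ i < rσ j →
      (if j = ystar then (1 : ℝ) else 0) ≤ (if i = ystar then (1 : ℝ) else 0)) :=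
  phiInfty_satisfies_PMC_general M σ hσ rσ hpmc ystar hy
end
end
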